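/- Every nice formula is avoidable: for every nice formula f there is an infinite word over some finite alphabet avoiding f. In particular, any Dejean word over an alphabet large enough that the repetition threshold is below 1 + 2^{1-v(f)} avoids f. -/

import Mathlib

/-!
Let `h` be an occurrence of a nice formula on `v` variables and let `m` be a variable with
`|h m|` maximal. Some fragment contains `m` twice. Between two consecutive occurrences of `m`
there is either a short gap, and then `h m ⋯ h m` is a repetition of exponent at least
`1 + 2 ^ (1 - v)`, or a long word over at most `v - 1` variables, which by induction on the
number of letters (each variable weighted by the length of its image) contains a factor whose
image is such a repetition. Hence every `(1 + 2 ^ (1 - v))`-free word avoids the formula, in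
particular every `RT(n)⁺`-free word once `RT(n) < 1 + 2 ^ (1 - v)`.

For avoidability it remains to find an infinite word over `4 Q + 2` letters, `Q = 2 ^ v`, without
repetitions of exponent `≥ 1 + 1 / Q`. A bad one-letter extension of a good word of length `L` is
determined by the length `a` and the period `≤ Q a` of its final repetition together with a good
prefix of length `L + 1 - a`. If the number of good words at least doubles at each length up to
`L`, there are at most `Q a · #good_L / 2 ^ (a - 1)` of these for each `a`, hence at most
`4 Q · #good_L` in all, so it doubles again. Good words therefore exist at every length, and
Kőnig's lemma produces an infinite one.
-/

/-- The finite factor of the infinite word `w` starting at position `i` of length `n`. -/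
def extract {α : Type*} (w : ℕ → α) (i n : ℕ) : List α :=
  (List.range n).map (fun k => w (i + k))

/-- `u` is a (finite) factor of the infinite word `w`. -/
def IsFactorOf {α : Type*} (u : List α) (w : ℕ → α) : Prop :=
  ∃ i, u = extract w i u.length

/-- A morphism (given on variables/letters) is non-erasing. -/
def NonErasing {V α : Type*} (h : V → List α) : Prop := ∀ v, h v ≠ []

/-- The image of a pattern `p` under the morphism induced by `h`. -/
def patImage {V α : Type*} (h : V → List α) (p : List V) : List α :=
  (p.map h).flatten

/-- `h` is an occurrence of the formula `f` (a set of fragments) in the infinite word `w`: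
`h` is non-erasing and the `h`-image of every fragment of `f` is a factor of `w`. -/
def OccursIn {V α : Type*} (f : Set (List V)) (h : V → List α) (w : ℕ → α) : Prop :=
  NonErasing h ∧ ∀ p ∈ f, IsFactorOf (patImage h p) w

/-- The infinite word `w` avoids the formula `f`. -/
def Avoids {V α : Type*} (w : ℕ → α) (f : Set (List V)) : Prop :=
  ∀ h : V → List α, ¬ OccursIn f h w

/-- An infinite word is recurrent if every factor occurs infinitely often. -/
def Recurrent {α : Type*} (w : ℕ → α) : Prop :=
  ∀ u : List α, IsFactorOf u w → ∀ N, ∃ i ≥ N, u = extract w i u.length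

/-- An infinite word is square-free if it has no factor `uu` with `u` nonempty. -/
def SquareFree {α : Type*} (w : ℕ → α) : Prop :=
  ∀ u : List α, u ≠ [] → ¬ IsFactorOf (u ++ u) w

/-- The formula `f'` divides the formula `f`: some non-erasing morphism maps every
fragment of `f'` to a factor of some fragment of `f`. -/
def Divides {V' V : Type*} (f' : Set (List V')) (f : Set (List V)) : Prop :=
  ∃ h : V' → List V, NonErasing h ∧ ∀ q ∈ f', ∃ p ∈ f, patImage h q <:+: p

/-- The avoidability index of a formula: the least alphabet size over which there is an
infinite word avoiding it. -/
noncomputable def lamIdx {V : Type*} (f : Set (List V)) : ℕ :=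
  sInf {n : ℕ | ∃ w : ℕ → Fin n, Avoids w f}

/-- A formula is avoidable if some infinite word over some finite alphabet avoids it. -/
def Avoidable {V : Type*} (f : Set (List V)) : Prop :=
  ∃ (n : ℕ) (w : ℕ → Fin n), Avoids w f

/-- An infinite word is `r`-free: every factor of the form `x ++ y ++ x` with `x ≠ []`
(a repetition of period `|xy|` and exponent `|xyx|/|xy|`) has exponent `< r`. -/
def AlphaFree {α : Type*} (w : ℕ → α) (r : ℝ) : Prop :=
  ∀ x y : List α, x ≠ [] → IsFactorOf (x ++ y ++ x) w →
    ((2 * x.length + y.length : ℝ) / (x.length + y.length)) < r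

/-- An infinite word is `r⁺`-free: every such repetition has exponent `≤ r`. -/
def AlphaPlusFree {α : Type*} (w : ℕ → α) (r : ℝ) : Prop :=
  ∀ x y : List α, x ≠ [] → IsFactorOf (x ++ y ++ x) w →
    ((2 * x.length + y.length : ℝ) / (x.length + y.length)) ≤ r

/-- A finite word is `r⁺`-free. -/
def AlphaPlusFreeList {α : Type*} (u : List α) (r : ℝ) : Prop :=
  ∀ x y : List α, x ≠ [] → (x ++ y ++ x) <:+: u →
    ((2 * x.length + y.length : ℝ) / (x.length + y.length)) ≤ r

theorem extract_length {α : Type*} (w : ℕ → α) (i n : ℕ) : (extract w i n).length = n := by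
  simp [extract]

theorem extract_add {α : Type*} (w : ℕ → α) (i m n : ℕ) :
    extract w i (m + n) = extract w i m ++ extract w (i + m) n := by
  simp only [extract, List.range_add, List.map_append, List.map_map]
  congr 1
  exact List.map_congr_left fun k _ => by simp [Nat.add_assoc]

theorem IsFactorOf.infix {α : Type*} {w : ℕ → α} {u v : List α}
    (hv : IsFactorOf v w) (huv : u <:+: v) : IsFactorOf u w := by
  obtain ⟨i, hi⟩ := hv
  obtain ⟨s, t, rfl⟩ := huv
  refine ⟨i + s.length, ?_⟩
  simp only [List.length_append, extract_add] at hi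
  have hsu := (List.append_inj' hi (by simp [extract_length])).1
  exact (List.append_inj' hsu (by simp [extract_length])).2

theorem exists_forall_isFactorOf {α : Type*} [Finite α] {P : List α → Prop}
    (hP : ∀ ⦃u v⦄, P v → u <:+: v → P u) (hex : ∀ n, ∃ u, u.length = n ∧ P u) :
    ∃ w : ℕ → α, ∀ u, IsFactorOf u w → P u := by
  let A : ℕ → Type _ := fun n => {u : List α // u.length = n ∧ P u}
  have hfin : ∀ n, Finite (A n) := fun n =>
    ((List.finite_length_eq α n).subset fun _ hu => hu.1).to_subtype
  have hne : ∀ n, Nonempty (A n) := fun n =>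
    let ⟨u, hu⟩ := hex n; ⟨⟨u, hu⟩⟩
  obtain ⟨f, hf⟩ := exists_seq_forall_proj_of_forall_finite (α := A)
    (fun {i _} hij u => ⟨u.1.take i, by simp [u.2.1, hij], hP u.2.2 (List.take_prefix _ _).isInfix⟩)
    (fun _ u => Subtype.ext (List.take_of_length_le u.2.1.le))
    (fun _ _ _ hij _ u => Subtype.ext (by simp [List.take_take, hij]))
    (fun _ _ => Set.toFinite _)
  let w : ℕ → α := fun k => (f (k + 1)).1[k]'(by rw [(f (k + 1)).2.1]; omega)
  have hprefix : ∀ n, extract w 0 n = (f n).1 := by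
    intro n
    apply List.ext_getElem (by simp [extract_length, (f n).2.1])
    intro k hk _
    have hkn : k + 1 ≤ n := by rw [extract_length] at hk; omega
    have htake := congrArg Subtype.val (hf hkn)
    rw [show (extract w 0 n)[k] = w k by simp [extract]]
    exact (List.getElem_of_eq htake.symm _).trans List.getElem_take
  refine ⟨w, ?_⟩
  rintro u ⟨i, hi⟩
  refine hP (f (i + u.length)).2.2 ⟨extract w 0 i, [], ?_⟩
  rw [← hprefix, extract_add, zero_add, ← hi, List.append_nil]

theorem patImage_append {V α : Type*} (h : V → List α) (p q : List V) :
    patImage h (p ++ q) = patImage h p ++ patImage h q := by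
  simp [patImage]

theorem length_patImage {V α : Type*} (h : V → List α) (p : List V) :
    (patImage h p).length = (p.map fun v => (h v).length).sum := by
  simp [patImage, List.length_flatten, Function.comp_def]

theorem patImage_infix_patImage {V α : Type*} (h : V → List α) {p q : List V} (hpq : p <:+: q) :
    patImage h p <:+: patImage h q := by
  obtain ⟨s, t, rfl⟩ := hpq
  exact ⟨patImage h s, patImage h t, by simp [patImage_append]⟩

theorem NonErasing.patImage_ne_nil {V α : Type*} {h : V → List α} (hh : NonErasing h)
    {p : List V} (hp : p ≠ []) : patImage h p ≠ [] := by
  obtain ⟨a, t, rfl⟩ := List.exists_cons_of_ne_nil hp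
  simp [patImage, hh a]

theorem List.exists_eq_append_cons_notMem {V : Type*} {a : V} {l : List V} (h : a ∈ l) :
    ∃ s t, l = s ++ a :: t ∧ a ∉ s := by
  induction l with
  | nil => cases h
  | cons b l ih =>
    by_cases hab : a = b
    · exact ⟨[], l, by simp [hab], List.not_mem_nil⟩
    · obtain ⟨s, t, rfl, hs⟩ := ih ((List.mem_cons.mp h).resolve_left hab)
      exact ⟨b :: s, t, rfl, by simp [hs, hab]⟩

theorem List.card_toFinset_le_of_notMem {V : Type*} [DecidableEq V] {S : Finset V}
    {k : ℕ} (hS : S.card ≤ k + 1) {m : V} (hm : m ∈ S) {U : List V} (hU : ∀ c ∈ U, c ∈ S)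
    (hmU : m ∉ U) : U.toFinset.card ≤ k := by
  have hsub : U.toFinset ⊆ S.erase m := fun c hc =>
    Finset.mem_erase.mpr ⟨fun hcm => hmU (hcm ▸ List.mem_toFinset.mp hc),
      hU c (List.mem_toFinset.mp hc)⟩
  have := Finset.card_le_card hsub
  rw [Finset.card_erase_of_mem hm] at this
  omega

section WeightedRepetition

variable {V : Type*} (ℓ : V → ℕ)

/-- When `ℓ` gives the lengths of the images of the letters under a morphism, the image of such a
repetition has exponent at least `1 + 2 ^ (1 - k)`. -/
def HasRepetition (k : ℕ) (W : List V) : Prop :=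
  ∃ x y, x ≠ [] ∧ x ++ y ++ x <:+: W ∧
    2 * ((x.map ℓ).sum + (y.map ℓ).sum) ≤ 2 ^ k * (x.map ℓ).sum

variable {ℓ}

theorem HasRepetition.mono {k k' : ℕ} {U W : List V} (h : HasRepetition ℓ k U) (hk : k ≤ k')
    (hUW : U <:+: W) : HasRepetition ℓ k' W := by
  obtain ⟨x, y, hx, hxyx, hle⟩ := h
  exact ⟨x, y, hx, hxyx.trans hUW,
    hle.trans (Nat.mul_le_mul_right _ (Nat.pow_le_pow_right two_pos hk))⟩

theorem HasRepetition.exists_isFactorOf {α : Type*} {h : V → List α} {w : ℕ → α} {k : ℕ}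
    {p : List V} (hp : HasRepetition (fun v => (h v).length) k p) (hh : NonErasing h)
    (hpw : IsFactorOf (patImage h p) w) :
    ∃ X Y : List α, X ≠ [] ∧ IsFactorOf (X ++ Y ++ X) w ∧
      2 * (X.length + Y.length) ≤ 2 ^ k * X.length := by
  obtain ⟨x, y, hx, hxyx, hle⟩ := hp
  refine ⟨patImage h x, patImage h y, hh.patImage_ne_nil hx, hpw.infix ?_, ?_⟩
  · simpa only [patImage_append] using patImage_infix_patImage h hxyx
  · simpa only [length_patImage] using hle

variable [DecidableEq V]

theorem hasRepetition_succ_of_two_le_count {k : ℕ}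
    (ih : ∀ U : List V, U.toFinset.card ≤ k → 2 ^ k ≤ U.length → HasRepetition ℓ k U)
    {S : Finset V} (hS : S.card ≤ k + 1) {m : V} (hmS : m ∈ S) (hmax : ∀ c ∈ S, ℓ c ≤ ℓ m)
    {W : List V} (hWS : ∀ c ∈ W, c ∈ S) (hm : 2 ≤ W.count m) : HasRepetition ℓ (k + 1) W := by
  obtain ⟨A, B, rfl, hmA⟩ := List.exists_eq_append_cons_notMem
    (List.count_pos_iff.mp (by omega : 0 < W.count m))
  have hmB : m ∈ B := by
    rw [List.count_append, List.count_cons_self, List.count_eq_zero.mpr hmA] at hm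
    exact List.count_pos_iff.mp (by omega)
  obtain ⟨C, D, rfl, hmC⟩ := List.exists_eq_append_cons_notMem hmB
  have hinfix : [m] ++ C ++ [m] <:+: A ++ m :: (C ++ m :: D) := ⟨A, D, by simp⟩
  have hCS : ∀ c ∈ C, c ∈ S := fun c hc => hWS c (by simp [hc])
  by_cases hC : C.length < 2 ^ k
  · refine ⟨[m], C, by simp, hinfix, ?_⟩
    have hsum : (C.map ℓ).sum ≤ C.length * ℓ m := by
      simpa using List.sum_le_card_nsmul (C.map ℓ) (ℓ m) (by
        simpa using fun c hc => hmax c (hCS c hc))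
    have : (C.length + 1) * ℓ m ≤ 2 ^ k * ℓ m := Nat.mul_le_mul_right _ hC
    simp only [List.map_cons, List.map_nil, List.sum_singleton, pow_succ]
    nlinarith
  · have hCk := List.card_toFinset_le_of_notMem hS hmS hCS hmC
    exact (ih C hCk (by omega)).mono k.le_succ ⟨A ++ [m], m :: D, by simp⟩

theorem hasRepetition_of_card_le (k : ℕ) (W : List V) (hcard : W.toFinset.card ≤ k)
    (hlen : 2 ^ k ≤ W.length) : HasRepetition ℓ k W := by
  induction k generalizing W with
  | zero =>
    obtain ⟨a, ha⟩ := List.exists_mem_of_length_pos (l := W) (by simp at hlen; omega)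
    have := Finset.card_pos.mpr ⟨a, List.mem_toFinset.mpr ha⟩
    omega
  | succ k ih =>
    obtain ⟨m, hmW, hmax⟩ := Finset.exists_max_image W.toFinset ℓ
      (Finset.nonempty_of_ne_empty (by
        intro h
        simp only [List.toFinset_eq_empty_iff] at h
        simp [h] at hlen))
    have hWS : ∀ c ∈ W, c ∈ W.toFinset := fun c hc => List.mem_toFinset.mpr hc
    by_cases hm : 2 ≤ W.count m
    · exact hasRepetition_succ_of_two_le_count ih hcard hmW hmax hWS hm
    obtain ⟨A, B, rfl, hmA⟩ := List.exists_eq_append_cons_notMem (List.mem_toFinset.mp hmW)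
    have hmB : m ∉ B := by
      rw [List.count_append, List.count_cons_self, List.count_eq_zero.mpr hmA] at hm
      exact List.count_eq_zero.mp (by omega)
    have hlen' : 2 ^ k ≤ A.length ∨ 2 ^ k ≤ B.length := by
      simp only [List.length_append, List.length_cons, pow_succ] at hlen
      omega
    rcases hlen' with hA | hB
    · have hAk := List.card_toFinset_le_of_notMem hcard hmW
        (fun c hc => hWS c (by simp [hc])) hmA
      exact (ih A hAk hA).mono k.le_succ ⟨[], m :: B, by simp⟩
    · have hBk := List.card_toFinset_le_of_notMem hcard hmW
        (fun c hc => hWS c (by simp [hc])) hmB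
      exact (ih B hBk hB).mono k.le_succ ⟨A ++ [m], [], by simp⟩

theorem hasRepetition_of_two_le_count [Fintype V] {m : V} (hmax : ∀ c, ℓ c ≤ ℓ m)
    {W : List V} (hm : 2 ≤ W.count m) : HasRepetition ℓ (Fintype.card V) W := by
  have hpos : 0 < Fintype.card V := Fintype.card_pos_iff.mpr ⟨m⟩
  obtain ⟨k, hk⟩ : ∃ k, Fintype.card V = k + 1 := ⟨_, (Nat.succ_pred_eq_of_pos hpos).symm⟩
  rw [hk]
  exact hasRepetition_succ_of_two_le_count
    (fun U => hasRepetition_of_card_le k U) (Finset.card_univ.trans_le hk.le)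
    (Finset.mem_univ m) (fun c _ => hmax c) (fun c _ => Finset.mem_univ c) hm

end WeightedRepetition

theorem OccursIn.exists_repetition {V α : Type*} [Fintype V] [DecidableEq V] [Nonempty V]
    {f : Set (List V)} (hnice : ∀ v : V, ∃ p ∈ f, 2 ≤ p.count v) {h : V → List α} {w : ℕ → α}
    (hocc : OccursIn f h w) :
    ∃ X Y : List α, X ≠ [] ∧ IsFactorOf (X ++ Y ++ X) w ∧
      2 * (X.length + Y.length) ≤ 2 ^ Fintype.card V * X.length := by
  obtain ⟨m, -, hmax⟩ :=
    Finset.exists_max_image Finset.univ (fun v => (h v).length) Finset.univ_nonempty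
  obtain ⟨p, hpf, hp⟩ := hnice m
  exact (hasRepetition_of_two_le_count (fun c => hmax c (Finset.mem_univ c)) hp).exists_isFactorOf
    hocc.1 (hocc.2 p hpf)

theorem one_add_two_zpow_le_exponent {A B v : ℕ} (hA : 0 < A) (h : 2 * (A + B) ≤ 2 ^ v * A) :
    1 + (2 : ℝ) ^ ((1 : ℤ) - v) ≤ (2 * A + B) / (A + B) := by
  have hAB : (0 : ℝ) < A + B := by positivity
  have h' : 2 * ((A : ℝ) + B) ≤ 2 ^ v * A := by exact_mod_cast h
  have hq : 2 * ((A : ℝ) + B) / 2 ^ v ≤ A := by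
    rw [div_le_iff₀ (by positivity)]
    linarith
  rw [zpow_sub₀ two_ne_zero, zpow_one, zpow_natCast, le_div_iff₀ hAB, add_mul,
    div_mul_eq_mul_div]
  linarith

theorem sum_Icc_mul_two_pow_add (M : ℕ) :
    ∑ a ∈ Finset.Icc 1 M, a * 2 ^ (M - a) + M + 2 = 2 ^ (M + 1) := by
  induction M with
  | zero => simp
  | succ M ih =>
    rw [Finset.sum_Icc_succ_top (by omega)]
    have hdouble : ∑ a ∈ Finset.Icc 1 M, a * 2 ^ (M + 1 - a)
        = 2 * ∑ a ∈ Finset.Icc 1 M, a * 2 ^ (M - a) := by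
      rw [Finset.mul_sum]
      refine Finset.sum_congr rfl fun a ha => ?_
      rw [show M + 1 - a = M - a + 1 by have := (Finset.mem_Icc.mp ha).2; omega, pow_succ]
      ring
    rw [hdouble, Nat.sub_self, pow_zero, mul_one, pow_succ 2 (M + 1)]
    omega

/-- The constant is `∑ a / 2 ^ (a - 1) = 4`. -/
theorem sum_Icc_mul_le_four_mul {g : ℕ → ℕ} {B M : ℕ}
    (hg : ∀ a ∈ Finset.Icc 1 M, 2 ^ (a - 1) * g a ≤ B) :
    ∑ a ∈ Finset.Icc 1 M, a * g a ≤ 4 * B := by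
  refine Nat.le_of_mul_le_mul_right ?_ (pow_pos two_pos M)
  calc (∑ a ∈ Finset.Icc 1 M, a * g a) * 2 ^ M
      = ∑ a ∈ Finset.Icc 1 M, 2 * (a * 2 ^ (M - a)) * (2 ^ (a - 1) * g a) := by
        rw [Finset.sum_mul]
        refine Finset.sum_congr rfl fun a ha => ?_
        obtain ⟨ha1, haM⟩ := Finset.mem_Icc.mp ha
        rw [show 2 ^ M = 2 * 2 ^ (M - a) * 2 ^ (a - 1) by
          rw [← pow_succ', ← pow_add]; congr 1; omega]
        ring
    _ ≤ ∑ a ∈ Finset.Icc 1 M, 2 * (a * 2 ^ (M - a)) * B :=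
        Finset.sum_le_sum fun a ha => Nat.mul_le_mul_left _ (hg a ha)
    _ = 2 * (∑ a ∈ Finset.Icc 1 M, a * 2 ^ (M - a)) * B := by
        rw [← Finset.sum_mul, ← Finset.mul_sum]
    _ ≤ 2 * 2 ^ (M + 1) * B := by
        have := sum_Icc_mul_two_pow_add M
        gcongr
        omega
    _ = 4 * B * 2 ^ M := by ring

theorem two_pow_mul_le_of_two_mul_le {g : ℕ → ℕ} {L : ℕ} (h : ∀ i < L, 2 * g i ≤ g (i + 1)) :
    ∀ j ≤ L, 2 ^ j * g (L - j) ≤ g L := by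
  intro j
  induction j with
  | zero => simp
  | succ j ih =>
    intro hj
    calc 2 ^ (j + 1) * g (L - (j + 1)) = 2 ^ j * (2 * g (L - (j + 1))) := by ring
      _ ≤ 2 ^ j * g (L - j) := by
        have := h (L - (j + 1)) (by omega)
        rw [show L - (j + 1) + 1 = L - j by omega] at this
        exact Nat.mul_le_mul_left _ this
      _ ≤ g L := ih (by omega)

section ShortRepFree

variable {α : Type*}

/-- `u` is `(1 + 1 / Q)`-free: the repetition `x y x` has exponent `1 + |x| / |x y|`. -/
def ShortRepFree (Q : ℕ) (u : List α) : Prop :=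
  ∀ x y : List α, x ≠ [] → x ++ y ++ x <:+: u → Q * x.length < x.length + y.length

variable {Q : ℕ}

theorem ShortRepFree.infix {u v : List α} (hv : ShortRepFree Q v) (huv : u <:+: v) :
    ShortRepFree Q u :=
  fun x y hx hxyx => hv x y hx (hxyx.trans huv)

theorem shortRepFree_nil : ShortRepFree Q ([] : List α) := by
  intro x y hx hxyx
  have := List.eq_nil_of_infix_nil hxyx
  simp_all

theorem ShortRepFree.exists_eq_append_of_append_singleton {u : List α} {c : α}
    (hu : ShortRepFree Q u) (huc : ¬ ShortRepFree Q (u ++ [c])) :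
    ∃ s x y, x ≠ [] ∧ x.length + y.length ≤ Q * x.length ∧ u ++ [c] = s ++ (x ++ y ++ x) := by
  simp only [ShortRepFree, not_forall, not_lt] at huc
  obtain ⟨x, y, hx, ⟨s, t, hst⟩, hle⟩ := huc
  refine ⟨s, x, y, hx, hle, ?_⟩
  rcases List.eq_nil_or_concat t with rfl | ⟨t', c', rfl⟩
  · simpa using hst.symm
  · have hst' : s ++ (x ++ y ++ x) ++ t' ++ [c'] = u ++ [c] := by simpa using hst
    have hu' := (List.append_inj' hst' rfl).1
    exact absurd (hu x y hx ⟨s, t', hu'⟩) (not_lt.mpr hle)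

/-- The word `t` continued by `a` letters with period `p`. -/
def extendWithPeriod (t : List α) (p a : ℕ) : List α :=
  t ++ (t.drop (t.length - p)).take a

theorem extendWithPeriod_append (s x y : List α) :
    extendWithPeriod (s ++ (x ++ y)) (x.length + y.length) x.length = s ++ (x ++ y ++ x) := by
  have hd : (s ++ (x ++ y)).length - (x.length + y.length) = s.length := by simp
  rw [extendWithPeriod, hd, List.drop_left, List.take_left]
  simp

noncomputable def shortRepFreeWords (Q : ℕ) (α : Type*) [Finite α] (L : ℕ) : Finset (List α) :=
  ((List.finite_length_eq α L).subset fun _ hu => hu.1 :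
    {u : List α | u.length = L ∧ ShortRepFree Q u}.Finite).toFinset

theorem mem_shortRepFreeWords [Finite α] {L : ℕ} {u : List α} :
    u ∈ shortRepFreeWords Q α L ↔ u.length = L ∧ ShortRepFree Q u := by
  simp [shortRepFreeWords]

end ShortRepFree

theorem List.append_singleton_injective {α : Type*} :
    Function.Injective fun q : List α × α => q.1 ++ [q.2] := by
  intro q q' h
  obtain ⟨h1, h2⟩ := List.append_inj' h rfl
  exact Prod.ext h1 (List.singleton_inj.mp h2)

section Counting

open Finset

variable {α : Type*} [Fintype α] {Q : ℕ}

open Classical in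
theorem card_filter_not_shortRepFree_le {L : ℕ}
    (hchain : ∀ j ≤ L, 2 ^ j * #(shortRepFreeWords Q α (L - j)) ≤ #(shortRepFreeWords Q α L)) :
    #{q ∈ shortRepFreeWords Q α L ×ˢ univ | ¬ ShortRepFree Q (q.1 ++ [q.2])}
      ≤ 4 * Q * #(shortRepFreeWords Q α L) := by
  classical
  set G := shortRepFreeWords Q α
  let S := (Icc 1 (L + 1)).sigma fun a => Icc a (Q * a) ×ˢ G (L + 1 - a)
  have hmaps : Set.MapsTo (fun q : List α × α => q.1 ++ [q.2])
      ({q ∈ G L ×ˢ univ | ¬ ShortRepFree Q (q.1 ++ [q.2])} : Finset _)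
      (S.image fun z => extendWithPeriod z.2.2 z.2.1 z.1) := by
    rintro ⟨u, c⟩ hq
    simp only [coe_filter, mem_product, mem_univ, and_true, Set.mem_ofPred_eq] at hq
    obtain ⟨huG, hbad⟩ := hq
    obtain ⟨hul, hu⟩ := mem_shortRepFreeWords.mp huG
    obtain ⟨s, x, y, hx, hle, hsxyx⟩ := hu.exists_eq_append_of_append_singleton hbad
    have hlen := congrArg List.length hsxyx
    simp only [List.length_append, List.length_singleton] at hlen
    have hxpos : 0 < x.length := List.length_pos_iff.mpr hx
    have hpre : s ++ (x ++ y) <+: u :=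
      List.prefix_of_prefix_length_le ⟨x, by rw [hsxyx]; simp⟩ (List.prefix_append u [c])
        (by simp; omega)
    refine mem_image.mpr ⟨⟨x.length, x.length + y.length, s ++ (x ++ y)⟩, ?_, ?_⟩
    · simp only [S, mem_sigma, mem_Icc, mem_product, mem_shortRepFreeWords, G]
      exact ⟨⟨hxpos, by omega⟩, ⟨by omega, hle⟩, by simp; omega, hu.infix hpre.isInfix⟩
    · exact (extendWithPeriod_append s x y).trans hsxyx.symm
  have hcardS : #S ≤ ∑ a ∈ Icc 1 (L + 1), a * (Q * #(G (L + 1 - a))) := by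
    rw [card_sigma]
    refine sum_le_sum fun a ha => ?_
    rw [card_product, Nat.card_Icc]
    have := (mem_Icc.mp ha).1
    calc (Q * a + 1 - a) * #(G (L + 1 - a)) ≤ (Q * a) * #(G (L + 1 - a)) :=
          Nat.mul_le_mul_right _ (by omega)
      _ = a * (Q * #(G (L + 1 - a))) := by ring
  have hsum : ∑ a ∈ Icc 1 (L + 1), a * (Q * #(G (L + 1 - a))) ≤ 4 * (Q * #(G L)) := by
    refine sum_Icc_mul_le_four_mul fun a ha => ?_
    have := hchain (a - 1) (by have := mem_Icc.mp ha; omega)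
    rw [show L - (a - 1) = L + 1 - a by have := mem_Icc.mp ha; omega] at this
    calc 2 ^ (a - 1) * (Q * #(G (L + 1 - a))) = Q * (2 ^ (a - 1) * #(G (L + 1 - a))) := by ring
      _ ≤ Q * #(G L) := Nat.mul_le_mul_left _ this
  calc _ ≤ #(S.image fun z => extendWithPeriod z.2.2 z.2.1 z.1) :=
        card_le_card_of_injOn _ hmaps List.append_singleton_injective.injOn
    _ ≤ #S := card_image_le
    _ ≤ 4 * Q * #(G L) := by rw [mul_assoc]; exact hcardS.trans hsum

theorem two_mul_card_shortRepFreeWords_le (hα : 4 * Q + 2 ≤ Fintype.card α) (L : ℕ) :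
    2 * #(shortRepFreeWords Q α L) ≤ #(shortRepFreeWords Q α (L + 1)) := by
  classical
  induction L using Nat.strong_induction_on with
  | _ L ih =>
  set G := shortRepFreeWords Q α
  have hbad := card_filter_not_shortRepFree_le (two_pow_mul_le_of_two_mul_le ih)
  have hgood : #{q ∈ G L ×ˢ univ | ShortRepFree Q (q.1 ++ [q.2])} ≤ #(G (L + 1)) := by
    refine card_le_card_of_injOn _ ?_ List.append_singleton_injective.injOn
    rintro ⟨u, c⟩ hq
    simp only [coe_filter, mem_product, mem_univ, and_true, Set.mem_ofPred_eq] at hq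
    have hul := (mem_shortRepFreeWords.mp hq.1).1
    exact mem_shortRepFreeWords.mpr ⟨by simp [hul], hq.2⟩
  have hsplit := card_filter_add_card_filter_not (s := G L ×ˢ univ)
    fun q => ShortRepFree Q (q.1 ++ [q.2])
  rw [card_product, card_univ] at hsplit
  nlinarith [Nat.mul_le_mul_left #(G L) hα]

theorem exists_shortRepFree_word (hα : 4 * Q + 2 ≤ Fintype.card α) :
    ∃ w : ℕ → α, ∀ u, IsFactorOf u w → ShortRepFree Q u := by
  refine exists_forall_isFactorOf (fun _ _ hv huv => hv.infix huv) fun n => ?_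
  have hpos : ∀ L, 0 < #(shortRepFreeWords Q α L) := by
    intro L
    induction L with
    | zero => exact card_pos.mpr ⟨[], mem_shortRepFreeWords.mpr ⟨rfl, shortRepFree_nil⟩⟩
    | succ L ih => have := two_mul_card_shortRepFreeWords_le hα L; omega
  obtain ⟨u, hu⟩ := card_pos.mp (hpos n)
  exact ⟨u, mem_shortRepFreeWords.mp hu⟩

end Counting

/-- every nice formula `f` is avoidable. In particular, for n ≥ 5 with
repetition threshold RT(n) = n/(n-1) below 1 + 2^(1-v(f)), every Dejean word over
n letters (an (n/(n-1))⁺-free word) avoids `f`. -/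
theorem stmt8 {V : Type*} [Fintype V] [DecidableEq V] [Nonempty V]
    (f : Set (List V)) (hnice : ∀ v : V, ∃ p ∈ f, 2 ≤ p.count v) :
    Avoidable f ∧
    ∀ n : ℕ, 5 ≤ n →
      (n : ℝ) / ((n : ℝ) - 1) < 1 + (2 : ℝ) ^ ((1 : ℤ) - (Fintype.card V : ℤ)) →
      ∀ w : ℕ → Fin n, AlphaPlusFree w ((n : ℝ) / ((n : ℝ) - 1)) → Avoids w f := by
  refine ⟨?_, fun n _ hRT w hw h hocc => ?_⟩
  · obtain ⟨w, hw⟩ := exists_shortRepFree_word (α := Fin (4 * 2 ^ Fintype.card V + 2))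
      (Q := 2 ^ Fintype.card V) (by simp)
    refine ⟨_, w, fun h hocc => ?_⟩
    obtain ⟨X, Y, hX, hXYX, hle⟩ := hocc.exists_repetition hnice
    exact absurd (hw _ hXYX X Y hX (List.infix_refl _)) (by omega)
  · obtain ⟨X, Y, hX, hXYX, hle⟩ := hocc.exists_repetition hnice
    have hexp := one_add_two_zpow_le_exponent (List.length_pos_iff.mpr hX) hle
    have hfree := hw X Y hX hXYX
    linarith
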